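/- For every pair of natural numbers s < d, there exists a prime p such that the d-dimensional vector space F_p^d contains an s-dimensional subspace in general position with respect to the canonical basis. -/

import Mathlib

/-!
The values at `d` distinct points of the polynomials of degree `< s` form an `s`-dimensional
subspace of `K^d` (a Reed–Solomon code). A nonzero vector of it has fewer than `s` zero
coordinates, while a vector in the span of `d - s` coordinate vectors vanishes on the other `s`
coordinates, so the two spans meet trivially. Over `ZMod p` with `p ≥ d` the points exist.
-/

open Polynomial Function Finset

section GeneralPosition

variable {R ι κ μ : Type*} [Ring R] [Finite ι]

theorem linearIndependent_sum_elim_basisFun {U : Submodule R (ι → R)} (v : Module.Basis κ R U)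
    {π : μ → ι} (hπ : Injective π)
    (hU : ∀ x ∈ U, (∀ i ∉ Set.range π, x i = 0) → x = 0) :
    LinearIndependent R
      (Sum.elim (fun i => (v i : ι → R)) (fun j => Pi.basisFun R ι (π j))) := by
  have hspan_v : Submodule.span R (Set.range (U.subtype ∘ v)) = U := by
    rw [Set.range_comp, Submodule.span_image, v.span_eq, Submodule.map_top,
      Submodule.range_subtype]
  have hspan_π : Submodule.span R (Set.range fun j => Pi.basisFun R ι (π j)) ≤
      Submodule.pi (Set.range π)ᶜ fun _ => ⊥ := by
    rw [Submodule.span_le]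
    rintro _ ⟨j, rfl⟩ i hi
    have hij : i ≠ π j := fun h => hi ⟨j, h.symm⟩
    classical
    simp [hij]
  refine (v.linearIndependent.map' U.subtype U.ker_subtype).sum_type
    ((Pi.basisFun R ι).linearIndependent.comp π hπ) ?_
  rw [hspan_v, Submodule.disjoint_def]
  exact fun x hxU hx => hU x hxU fun i hi => hspan_π hx i hi

end GeneralPosition

namespace Polynomial

variable {K ι : Type*} [Field K]

noncomputable def reedSolomon (a : ι → K) (s : ℕ) : Submodule K (ι → K) :=
  (degreeLT K s).map (LinearMap.pi fun j => leval (a j))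

theorem eq_zero_of_mem_reedSolomon {a : ι → K} (ha : Injective a) {s : ℕ} {x : ι → K}
    (hx : x ∈ reedSolomon a s) {S : Finset ι} (hS : s ≤ #S) (hxS : ∀ j ∈ S, x j = 0) :
    x = 0 := by
  obtain ⟨P, hP, rfl⟩ := Submodule.mem_map.mp hx
  have hP0 : P = 0 := eq_zero_of_degree_lt_of_eval_index_eq_zero S ha.injOn
    ((mem_degreeLT.mp hP).trans_le (by exact_mod_cast hS)) hxS
  simp [hP0]

theorem finrank_reedSolomon [Fintype ι] {a : ι → K} (ha : Injective a) {s : ℕ}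
    (hs : s ≤ Fintype.card ι) : Module.finrank K (reedSolomon a s) = s := by
  set f := (LinearMap.pi fun j => leval (a j)) ∘ₗ (degreeLT K s).subtype
  have hf : Injective f := by
    rw [← LinearMap.ker_eq_bot, Submodule.eq_bot_iff]
    rintro ⟨P, hP⟩ hfP
    ext1
    exact eq_zero_of_degree_lt_of_eval_index_eq_zero univ ha.injOn
      ((mem_degreeLT.mp hP).trans_le (by exact_mod_cast hs)) fun j _ => congrFun hfP j
  have hrange : LinearMap.range f = reedSolomon a s := by
    rw [LinearMap.range_comp, Submodule.range_subtype, reedSolomon]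
  rw [← hrange, LinearMap.finrank_range_of_inj hf, (degreeLTEquiv K s).finrank_eq,
    Module.finrank_fin_fun]

end Polynomial

/-- For every pair of natural numbers `s < d` there is a prime `p` such that
`F_p^d` contains an `s`-dimensional subspace in general position with respect
to the canonical basis: any basis of the subspace together with any `d − s`
distinct canonical basis vectors is linearly independent. -/
theorem exists_subspace_in_general_position (d s : ℕ) (hsd : s < d) :
    ∃ p : ℕ, p.Prime ∧ ∃ _ : Fact p.Prime,
      ∃ U : Submodule (ZMod p) (Fin d → ZMod p),
        Module.finrank (ZMod p) U = s ∧
        ∀ (v : Module.Basis (Fin s) (ZMod p) U) (π : Fin (d - s) → Fin d),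
          Function.Injective π →
          LinearIndependent (ZMod p)
            (Sum.elim (fun i : Fin s => (v i : Fin d → ZMod p))
              (fun j : Fin (d - s) => Pi.basisFun (ZMod p) (Fin d) (π j))) := by
  obtain ⟨p, hdp, hp⟩ := Nat.exists_infinite_primes d
  have := Fact.mk hp
  obtain ⟨a⟩ : Nonempty (Fin d ↪ ZMod p) := Function.Embedding.nonempty_of_card_le (by simpa)
  refine ⟨p, hp, this, reedSolomon a s, finrank_reedSolomon a.injective (by simpa using hsd.le),
    fun v π hπ => linearIndependent_sum_elim_basisFun v hπ fun x hx hxπ => ?_⟩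
  have hcard : s ≤ #(univ.image π)ᶜ := by
    rw [card_compl, card_image_of_injective _ hπ]
    simp only [card_univ, Fintype.card_fin]
    omega
  exact eq_zero_of_mem_reedSolomon a.injective hx hcard fun j hj => hxπ j (by simpa using hj)
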